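/- arXiv:1912.13342 — 6 statements merged into one kernel-verified Lean document; each statement's English description precedes it below -/
import Mathlib

section
/- Let z₀ ∈ ℂ with 0 < |z₀|, let 0 < r, let λ ∈ ℂ with |λ| ≤ 1, and set ρ₁ = r/|z₀|, ρ₂ = |z₀| + r, ρ = max(ρ₁, ρ₂). Then for every natural number n there exists a polynomial qₙ of degree at most n with coefficients in ℤ + iℤ such that sup_{|z−z₀| ≤ r} |λ − qₙ(z)| ≤ (n+1)·ρⁿ. -/
/-!
Every polynomial `P` of degree `≤ n` can be written as `q + ∑ₖ eₖ (z₀ - z)^(n-k) z^k` with `q` a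
Gaussian-integer polynomial and `|eₖ| ≤ |z₀|^(k-n)`: round the constant term of `P` to a Gaussian
integer `g`, absorb the rounding error into `e₀ (z₀ - z)^n` (whose constant term is `e₀ z₀^n`), and
recurse on the quotient of the remainder by `z`. On the disk `|z - z₀| ≤ r` we have `|z₀ - z| ≤ r`
and `|z| ≤ |z₀| + r`, so each of the `n + 1` error terms for `P = λ` is at most `ρⁿ`.
-/

open Polynomial Finset Complex

def gaussianIntegers : Set ℂ := {x | ∃ a b : ℤ, x = a + b * I}

lemma zero_mem_gaussianIntegers : (0 : ℂ) ∈ gaussianIntegers := ⟨0, 0, by simp⟩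

lemma exists_mem_gaussianIntegers_norm_sub_le_one (c : ℂ) :
    ∃ g ∈ gaussianIntegers, ‖c - g‖ ≤ 1 := by
  refine ⟨round c.re + round c.im * I, ⟨_, _, rfl⟩, ?_⟩
  calc ‖c - (round c.re + round c.im * I)‖
      ≤ |c.re - round c.re| + |c.im - round c.im| := by
        simpa using norm_le_abs_re_add_abs_im (c - (round c.re + round c.im * I))
    _ ≤ 1 / 2 + 1 / 2 := add_le_add (abs_sub_round _) (abs_sub_round _)
    _ = 1 := by norm_num

section Decomposition

variable {𝕜 : Type*} [NormedField 𝕜] {S : Set 𝕜} {δ : ℝ} {z₀ : 𝕜}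

theorem exists_coeff_mem_eq_add_sum (hS₀ : (0 : 𝕜) ∈ S) (hS : ∀ c, ∃ g ∈ S, ‖c - g‖ ≤ δ)
    (hz₀ : z₀ ≠ 0) (n : ℕ) (P : 𝕜[X]) (hP : P.natDegree ≤ n) :
    ∃ q : 𝕜[X], q.natDegree ≤ n ∧ (∀ k, q.coeff k ∈ S) ∧
      ∃ e : ℕ → 𝕜, (∀ k ≤ n, ‖e k‖ ≤ δ / ‖z₀‖ ^ (n - k)) ∧
        P = q + ∑ k ∈ range (n + 1), C (e k) * (C z₀ - X) ^ (n - k) * X ^ k := by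
  induction n generalizing P with
  | zero =>
    obtain ⟨g, hgS, hg⟩ := hS (P.coeff 0)
    refine ⟨C g, (natDegree_C g).le, fun k => ?_, fun _ => P.coeff 0 - g, fun _ _ => by simpa, ?_⟩
    · cases k <;> simp [coeff_C, hgS, hS₀]
    · conv_lhs => rw [eq_C_of_natDegree_le_zero hP]
      simp
  | succ n ih =>
    obtain ⟨g, hgS, hg⟩ := hS (P.coeff 0)
    set e₀ := (P.coeff 0 - g) / z₀ ^ (n + 1)
    set R := P - C g - C e₀ * (C z₀ - X) ^ (n + 1)
    have hR₀ : R.coeff 0 = 0 := by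
      have h : ((C z₀ - X) ^ (n + 1)).coeff 0 = z₀ ^ (n + 1) := by simp [coeff_zero_eq_eval_zero]
      simp only [R, e₀, coeff_sub, coeff_C_zero, coeff_C_mul, h]
      field_simp
      ring
    have hR : R.natDegree ≤ n + 1 := by
      simp only [R]
      compute_degree
      exact max_le hP le_rfl
    have hRdivX : R = X * R.divX := by simpa [hR₀] using (X_mul_divX_add R).symm
    obtain ⟨q', hq'deg, hq'S, e', he', hdivX⟩ :=
      ih R.divX (by rw [natDegree_divX_eq_natDegree_tsub_one]; omega)
    refine ⟨C g + X * q', ?_, fun k => ?_, fun | 0 => e₀ | k + 1 => e' k, fun k hk => ?_, ?_⟩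
    · compute_degree
      omega
    · cases k <;> simp [coeff_C, coeff_X_mul, hgS, hq'S]
    · cases k with
      | zero => simpa [e₀, norm_div] using div_le_div_of_nonneg_right hg (by positivity)
      | succ k => simpa using he' k (by omega)
    · have hP : P = C g + C e₀ * (C z₀ - X) ^ (n + 1) + X * R.divX := by
        rw [← hRdivX]; ring
      rw [hP, hdivX, sum_range_succ' _ (n + 1), mul_add, mul_sum]
      simp only [Nat.sub_zero, pow_zero, mul_one, Nat.add_sub_add_right]
      ring_nf

end Decomposition

lemma pow_sub_mul_pow_le_max_pow {a b : ℝ} (ha : 0 ≤ a) (hb : 0 ≤ b) {k n : ℕ} (hk : k ≤ n) :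
    a ^ (n - k) * b ^ k ≤ max a b ^ n :=
  calc a ^ (n - k) * b ^ k ≤ max a b ^ (n - k) * max a b ^ k := by
        gcongr
        exacts [le_max_left a b, le_max_right a b]
    _ = max a b ^ n := by rw [← pow_add, Nat.sub_add_cancel hk]

lemma norm_mul_pow_sub_mul_pow_le {z₀ z e : ℂ} {r : ℝ} (hz : ‖z - z₀‖ ≤ r)
    {k n : ℕ} (hk : k ≤ n) (he : ‖e‖ ≤ 1 / ‖z₀‖ ^ (n - k)) :
    ‖e * (z₀ - z) ^ (n - k) * z ^ k‖ ≤ max (r / ‖z₀‖) (‖z₀‖ + r) ^ n := by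
  have hr : 0 ≤ r := (norm_nonneg _).trans hz
  have hz₀z : ‖z₀ - z‖ ≤ r := by rwa [norm_sub_rev]
  have hz : ‖z‖ ≤ ‖z₀‖ + r := (norm_le_norm_add_norm_sub' z z₀).trans (by gcongr)
  calc ‖e * (z₀ - z) ^ (n - k) * z ^ k‖
      ≤ 1 / ‖z₀‖ ^ (n - k) * r ^ (n - k) * (‖z₀‖ + r) ^ k := by
        rw [norm_mul, norm_mul, norm_pow, norm_pow]
        gcongr
    _ = (r / ‖z₀‖) ^ (n - k) * (‖z₀‖ + r) ^ k := by rw [div_pow]; ring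
    _ ≤ _ := pow_sub_mul_pow_le_max_pow (by positivity) (by positivity) hk

theorem stmt_1_general (z₀ : ℂ) (hz₀ : 0 < ‖z₀‖) (r : ℝ)
    (lam : ℂ) (n : ℕ) :
    ∃ q : Polynomial ℂ, q.degree ≤ n ∧
      (∀ k : ℕ, ∃ a b : ℤ, q.coeff k = (a : ℂ) + (b : ℂ) * Complex.I) ∧
      ∀ z : ℂ, ‖z - z₀‖ ≤ r →
        ‖lam - q.eval z‖ ≤
          (n + 1) * max (r / ‖z₀‖) (‖z₀‖ + r) ^ n := by
  obtain ⟨q, hdeg, hq, e, he, hlam⟩ :=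
    exists_coeff_mem_eq_add_sum zero_mem_gaussianIntegers
      exists_mem_gaussianIntegers_norm_sub_le_one (norm_pos_iff.mp hz₀) n (C lam)
      (natDegree_C lam ▸ n.zero_le)
  refine ⟨q, degree_le_of_natDegree_le hdeg, hq, fun z hz => ?_⟩
  calc ‖lam - q.eval z‖ = ‖∑ k ∈ range (n + 1), e k * (z₀ - z) ^ (n - k) * z ^ k‖ := by
        rw [← eval_C (a := lam) (x := z), hlam]
        simp [eval_finsetSum]
    _ ≤ ∑ k ∈ range (n + 1), ‖e k * (z₀ - z) ^ (n - k) * z ^ k‖ := norm_sum_le _ _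
    _ ≤ ∑ _k ∈ range (n + 1), max (r / ‖z₀‖) (‖z₀‖ + r) ^ n := sum_le_sum fun k hk =>
        have hk : k ≤ n := Nat.lt_succ_iff.mp (mem_range.mp hk)
        norm_mul_pow_sub_mul_pow_le hz hk (he k hk)
    _ = (n + 1) * max (r / ‖z₀‖) (‖z₀‖ + r) ^ n := by simp

theorem stmt_1 (z₀ : ℂ) (hz₀ : 0 < ‖z₀‖) (r : ℝ) (hr : 0 < r)
    (lam : ℂ) (hlam : ‖lam‖ ≤ 1) (n : ℕ) :
    ∃ q : Polynomial ℂ, q.degree ≤ n ∧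
      (∀ k : ℕ, ∃ a b : ℤ, q.coeff k = (a : ℂ) + (b : ℂ) * Complex.I) ∧
      ∀ z : ℂ, ‖z - z₀‖ ≤ r →
        ‖lam - q.eval z‖ ≤
          (n + 1) * max (r / ‖z₀‖) (‖z₀‖ + r) ^ n :=
  stmt_1_general z₀ hz₀ r lam n
end

section
/- Let z₀ ∈ ℂ, r > 0, and λ ∈ ℂ with λ not a Gaussian integer. Then for every polynomial q of degree at most n with Gaussian-integer coefficients, sup_{|z−z₀| ≤ r} |λ − q(z)| ≥ c(λ) · (r/|z₀|)ⁿ, where c(λ) = min over Gaussian integers m of |λ − m| > 0. (This uses the growth inequality |p(0)| ≤ (|z₀|/r)ⁿ · sup_{K_r} |p| for any degree-n polynomial p.) -/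
/-!
The maximum principle applied to `wⁿ p(z₀ + r / w)` on the unit disc, evaluated at
`w = -r / z₀`, gives `|p(0)| ≤ (|z₀| / r)ⁿ max_{K_r(z₀)} |p|`. For `p = λ - q` we have
`p(0) = λ - q(0)` with `q(0)` a Gaussian integer, so `|p(0)| ≥ c(λ)`; and `c(λ) > 0` because
the Gaussian integers form a closed set not containing `λ`.
-/

open Polynomial Metric Complex

lemma isClosed_setOf_gaussianInt :
    IsClosed {z : ℂ | ∃ a b : ℤ, z = (a : ℂ) + (b : ℂ) * I} := by
  have hZ : IsClosed (Set.range ((↑) : ℤ → ℝ)) := Int.isClosedEmbedding_coe_real.isClosed_range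
  convert (hZ.preimage continuous_re).inter (hZ.preimage continuous_im) using 1
  ext z
  constructor
  · rintro ⟨a, b, rfl⟩
    exact ⟨⟨a, by simp⟩, ⟨b, by simp⟩⟩
  · rintro ⟨⟨a, ha⟩, ⟨b, hb⟩⟩
    exact ⟨a, b, Complex.ext (by simp [ha]) (by simp [hb])⟩

lemma sInf_norm_sub_gaussianInt_pos {lam : ℂ}
    (hlam : ∀ a b : ℤ, lam ≠ (a : ℂ) + (b : ℂ) * I) :
    0 < sInf {x : ℝ | ∃ a b : ℤ, x = ‖lam - ((a : ℂ) + (b : ℂ) * I)‖} := by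
  set G := {z : ℂ | ∃ a b : ℤ, z = (a : ℂ) + (b : ℂ) * I}
  have hdist : 0 < infDist lam G :=
    (isClosed_setOf_gaussianInt.notMem_iff_infDist_pos ⟨0, 0, 0, by simp⟩).mp
      fun ⟨a, b, h⟩ => hlam a b h
  refine hdist.trans_le (le_csInf ⟨_, 0, 0, rfl⟩ ?_)
  rintro x ⟨a, b, rfl⟩
  rw [← dist_eq]
  exact infDist_le_dist_of_mem ⟨a, b, rfl⟩

lemma Polynomial.eval_eq_eval_reflect_inv_mul_pow {K : Type*} [Field K] {Q : K[X]} {n : ℕ}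
    (hQ : Q.natDegree ≤ n) {u : K} (hu : u ≠ 0) :
    Q.eval u = (reflect n Q).eval u⁻¹ * u ^ n := by
  let _ : Invertible u := invertibleOfNonzero hu
  simpa using (eval₂_reflect_mul_pow (RingHom.id K) u n Q hQ).symm

lemma Polynomial.norm_eval_le_pow_mul_of_norm_le_on_unit_circle {Q : ℂ[X]} {n : ℕ}
    (hQ : Q.natDegree ≤ n) {M : ℝ} (hM : ∀ w : ℂ, ‖w‖ = 1 → ‖Q.eval w‖ ≤ M) {u : ℂ}
    (hu : 1 ≤ ‖u‖) : ‖Q.eval u‖ ≤ ‖u‖ ^ n * M := by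
  have hu0 : u ≠ 0 := norm_pos_iff.mp (one_pos.trans_le hu)
  -- `reflect n Q` is `w ↦ wⁿ Q(1/w)`, which has modulus `|Q(1/w)|` on the unit circle.
  have hframe : ∀ w ∈ frontier (ball (0 : ℂ) 1), ‖(reflect n Q).eval w‖ ≤ M := by
    intro w hw
    rw [frontier_ball 0 one_ne_zero, mem_sphere_zero_iff_norm] at hw
    have hw0 : w ≠ 0 := norm_ne_zero_iff.mp (by rw [hw]; exact one_ne_zero)
    have := hM w⁻¹ (by rw [norm_inv, hw, inv_one])
    rwa [eval_eq_eval_reflect_inv_mul_pow hQ (inv_ne_zero hw0), inv_inv, norm_mul, norm_pow,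
      norm_inv, hw, inv_one, one_pow, mul_one] at this
  have hmax : ‖(reflect n Q).eval u⁻¹‖ ≤ M := by
    refine norm_le_of_forall_mem_frontier_norm_le isBounded_ball
      (reflect n Q).differentiable.diffContOnCl hframe ?_
    rw [closure_ball 0 one_ne_zero, mem_closedBall_zero_iff, norm_inv]
    exact inv_le_one_of_one_le₀ hu
  rw [eval_eq_eval_reflect_inv_mul_pow hQ hu0, norm_mul, norm_pow, mul_comm]
  exact mul_le_mul_of_nonneg_left hmax (by positivity)

lemma Polynomial.norm_eval_zero_le_of_norm_le_on_sphere {P : ℂ[X]} {n : ℕ}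
    (hP : P.natDegree ≤ n) {z₀ : ℂ} {r : ℝ} (hr : 0 < r) (hrz : r ≤ ‖z₀‖) {M : ℝ}
    (hM : ∀ z ∈ sphere z₀ r, ‖P.eval z‖ ≤ M) :
    ‖P.eval 0‖ ≤ (‖z₀‖ / r) ^ n * M := by
  have hrC : (r : ℂ) ≠ 0 := ofReal_ne_zero.mpr hr.ne'
  set Q := P.comp (C z₀ + C (r : ℂ) * X)
  have hQ : Q.natDegree ≤ n := by
    refine natDegree_comp_le.trans ?_
    have : (C z₀ + C (r : ℂ) * X).natDegree ≤ 1 := by compute_degree!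
    nlinarith
  have hQeval : ∀ u, Q.eval u = P.eval (z₀ + r * u) := fun u => by simp [Q]
  have hQM : ∀ w : ℂ, ‖w‖ = 1 → ‖Q.eval w‖ ≤ M := fun w hw => by
    refine hQeval w ▸ hM _ ?_
    rw [mem_sphere_iff_norm, add_sub_cancel_left, norm_mul, hw, mul_one, norm_real,
      Real.norm_of_nonneg hr.le]
  have hnorm : ‖-z₀ / r‖ = ‖z₀‖ / r := by
    rw [norm_div, norm_neg, norm_real, Real.norm_of_nonneg hr.le]
  have h0 : P.eval 0 = Q.eval (-z₀ / r) := by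
    rw [hQeval, mul_div_cancel₀ _ hrC, add_neg_cancel]
  rw [h0, ← hnorm]
  exact norm_eval_le_pow_mul_of_norm_le_on_unit_circle hQ hQM
    (by rw [hnorm, one_le_div hr]; exact hrz)

theorem stmt_2 (z₀ : ℂ) (r : ℝ) (hr : 0 < r) (hrz : r < ‖z₀‖)
    (lam : ℂ) (hlam : ∀ a b : ℤ, lam ≠ (a : ℂ) + (b : ℂ) * Complex.I)
    (n : ℕ) (q : Polynomial ℂ) (hqdeg : q.natDegree ≤ n)
    (hqcoeff : ∀ k : ℕ, ∃ a b : ℤ, q.coeff k = (a : ℂ) + (b : ℂ) * Complex.I) :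
    (0 < sInf {x : ℝ | ∃ a b : ℤ, x = ‖lam - ((a : ℂ) + (b : ℂ) * Complex.I)‖}) ∧
    ∃ z : ℂ, ‖z - z₀‖ ≤ r ∧
      sInf {x : ℝ | ∃ a b : ℤ, x = ‖lam - ((a : ℂ) + (b : ℂ) * Complex.I)‖} *
        (r / ‖z₀‖) ^ n ≤ ‖lam - q.eval z‖ := by
  refine ⟨sInf_norm_sub_gaussianInt_pos hlam, ?_⟩
  set P := C lam - q
  obtain ⟨z, hz, hzmax⟩ := (isCompact_closedBall z₀ r).exists_isMaxOn
    ⟨z₀, mem_closedBall_self hr.le⟩ (P.continuous.norm.continuousOn)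
  have hgrowth : ‖P.eval 0‖ ≤ (‖z₀‖ / r) ^ n * ‖P.eval z‖ :=
    norm_eval_zero_le_of_norm_le_on_sphere
      ((natDegree_sub_le _ _).trans (by simpa using hqdeg)) hr hrz.le
      fun w hw => hzmax (sphere_subset_closedBall hw)
  have hc : sInf {x : ℝ | ∃ a b : ℤ, x = ‖lam - ((a : ℂ) + (b : ℂ) * I)‖} ≤ ‖P.eval 0‖ := by
    obtain ⟨a, b, hab⟩ := hqcoeff 0
    refine csInf_le ⟨0, ?_⟩ ⟨a, b, ?_⟩
    · rintro x ⟨a, b, rfl⟩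
      exact norm_nonneg _
    · rw [← hab, coeff_zero_eq_eval_zero, eval_sub, eval_C]
  refine ⟨z, mem_closedBall_iff_norm.mp hz, ?_⟩
  have hz₀ : 0 < ‖z₀‖ := hr.trans hrz
  calc _ ≤ (‖z₀‖ / r) ^ n * ‖P.eval z‖ * (r / ‖z₀‖) ^ n := by gcongr; exact hc.trans hgrowth
    _ = ‖lam - q.eval z‖ := by
      rw [mul_right_comm, ← mul_pow, div_mul_div_cancel₀ hr.ne', div_self hz₀.ne', one_pow,
        one_mul]
      simp [P]
end

section
/- Let q ≥ 2 be a natural number and λ ∈ ℝ such that in the base-q expansion of λ no two consecutive digits are both 0 and no two consecutive digits are both q−1. Then for every n and every integer p₁, |λ − p₁/qⁿ| ≥ 1/q^{n+2}. -/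
theorem stmt_4 (q : ℕ) (hq : 2 ≤ q) (d : ℕ → ℕ) (hd : ∀ k, d k < q)
    (hdigits : ∀ k : ℕ, 1 ≤ k →
      ¬(d k = 0 ∧ d (k + 1) = 0) ∧ ¬(d k = q - 1 ∧ d (k + 1) = q - 1))
    (lam : ℝ) (hlam : lam = ∑' k : ℕ, (d (k + 1) : ℝ) / (q : ℝ) ^ (k + 1)) :
    ∀ (n : ℕ) (p₁ : ℤ), 1 / (q : ℝ) ^ (n + 2) ≤ |lam - (p₁ : ℝ) / (q : ℝ) ^ n| := by
  intro n p₁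
  have hqR : (2:ℝ) ≤ (q:ℝ) := by exact_mod_cast hq
  have hq0 : (0:ℝ) < (q:ℝ) := by linarith
  set r : ℝ := (q:ℝ)⁻¹ with hr_def
  have hr0 : 0 ≤ r := by positivity
  have hrpos : 0 < r := by positivity
  have hqr : (q:ℝ) * r = 1 := mul_inv_cancel₀ (ne_of_gt hq0)
  have hr1 : r < 1 := by
    rw [hr_def]
    rw [inv_lt_one_iff₀]
    right; linarith
  have hsumG : Summable (fun j : ℕ => r ^ j) := summable_geometric_of_lt_one hr0 hr1
  have hdle : ∀ m : ℕ, (d m : ℝ) ≤ (q:ℝ) - 1 := by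
    intro m
    have h : d m + 1 ≤ q := hd m
    have : (d m : ℝ) + 1 ≤ (q:ℝ) := by exact_mod_cast h
    linarith
  -- the full series
  set f : ℕ → ℝ := fun k => (d (k + 1) : ℝ) * r ^ (k + 1) with hf_def
  have hf_nonneg : ∀ k, 0 ≤ f k := fun k => by positivity
  have hf_le : ∀ k, f k ≤ ((q:ℝ) - 1) * r ^ (k + 1) := fun k =>
    mul_le_mul_of_nonneg_right (hdle _) (pow_nonneg hr0 _)
  have hmaj : Summable (fun k : ℕ => ((q:ℝ) - 1) * r ^ (k + 1)) := by
    have := (hsumG.mul_left (((q:ℝ) - 1) * r))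
    apply this.congr
    intro k; ring
  have hf : Summable f := Summable.of_nonneg_of_le hf_nonneg hf_le hmaj
  have hlam' : lam = ∑' k, f k := by
    rw [hlam]
    apply tsum_congr
    intro k
    rw [hf_def, hr_def, div_eq_mul_inv, ← inv_pow]
  -- the tail series
  set g : ℕ → ℝ := fun i => (d (n + i + 1) : ℝ) * r ^ (i + 1) with hg_def
  have hg_nonneg : ∀ i, 0 ≤ g i := fun i => by positivity
  have hg_le : ∀ i, g i ≤ ((q:ℝ) - 1) * r ^ (i + 1) := fun i =>
    mul_le_mul_of_nonneg_right (hdle _) (pow_nonneg hr0 _)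
  have hg : Summable g := Summable.of_nonneg_of_le hg_nonneg hg_le hmaj
  set t : ℝ := ∑' i, g i with ht_def
  -- split lam at n
  have hsplit : (∑ i ∈ Finset.range n, f i) + ∑' i, f (i + n) = ∑' i, f i :=
    Summable.sum_add_tsum_nat_add n hf
  have hT : ∑' i, f (i + n) = r ^ n * t := by
    rw [ht_def, ← tsum_mul_left]
    apply tsum_congr
    intro i
    show (d (i + n + 1) : ℝ) * r ^ (i + n + 1) = r ^ n * ((d (n + i + 1) : ℝ) * r ^ (i + 1))
    rw [show i + n + 1 = n + i + 1 from by omega]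
    rw [show n + i + 1 = n + (i + 1) from by omega, pow_add]
    ring
  -- the head is A * r^n for a natural A
  set A : ℕ := ∑ k ∈ Finset.range n, d (k + 1) * q ^ (n - 1 - k) with hA_def
  have hP : (∑ i ∈ Finset.range n, f i) = (A : ℝ) * r ^ n := by
    rw [hA_def]
    push_cast
    rw [Finset.sum_mul]
    apply Finset.sum_congr rfl
    intro k hk
    have hk' : k < n := Finset.mem_range.mp hk
    show (d (k + 1) : ℝ) * r ^ (k + 1) = (d (k + 1) : ℝ) * (q:ℝ) ^ (n - 1 - k) * r ^ n
    have hexp : (n - 1 - k) + (k + 1) = n := by omega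
    have hpow : (q:ℝ) ^ (n - 1 - k) * r ^ n = r ^ (k + 1) := by
      have hrn : r ^ n = r ^ (n - 1 - k) * r ^ (k + 1) := by rw [← pow_add, hexp]
      rw [hrn, ← mul_assoc, ← mul_pow, hqr, one_pow, one_mul]
    rw [mul_assoc, hpow]
  -- lower bound on t
  have hconstr := hdigits (n + 1) (by omega)
  have ht_lb : r ^ 2 ≤ t := by
    by_cases h1 : d (n + 1) = 0
    · have h2 : 1 ≤ d (n + 2) := by
        rcases Nat.eq_zero_or_pos (d (n + 2)) with h | h
        · exact absurd ⟨h1, by simpa [show n + 1 + 1 = n + 2 from rfl] using h⟩ hconstr.1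
        · exact h
      have hterm : r ^ 2 ≤ g 1 := by
        show r ^ 2 ≤ (d (n + 1 + 1) : ℝ) * r ^ (1 + 1)
        have : (1:ℝ) ≤ (d (n + 1 + 1) : ℝ) := by exact_mod_cast h2
        calc r ^ 2 = 1 * r ^ (1 + 1) := by ring
          _ ≤ (d (n + 1 + 1) : ℝ) * r ^ (1 + 1) :=
              mul_le_mul_of_nonneg_right this (pow_nonneg hr0 _)
      exact hterm.trans (Summable.le_tsum hg 1 fun j _ => hg_nonneg j)
    · have h2 : 1 ≤ d (n + 1) := Nat.one_le_iff_ne_zero.mpr h1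
      have hterm : r ^ 2 ≤ g 0 := by
        show r ^ 2 ≤ (d (n + 0 + 1) : ℝ) * r ^ (0 + 1)
        have : (1:ℝ) ≤ (d (n + 0 + 1) : ℝ) := by
          have : 1 ≤ d (n + 0 + 1) := by simpa using h2
          exact_mod_cast this
        have hrr : r ^ 2 ≤ r := by nlinarith
        calc r ^ 2 ≤ r := hrr
          _ = 1 * r ^ (0 + 1) := by ring
          _ ≤ (d (n + 0 + 1) : ℝ) * r ^ (0 + 1) := by
              exact mul_le_mul_of_nonneg_right this (pow_nonneg hr0 _)
      exact hterm.trans (Summable.le_tsum hg 0 fun j _ => hg_nonneg j)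
  -- upper bound on t
  have key : (d (n + 1) : ℝ) * (q:ℝ) + (d (n + 2) : ℝ) + 2 ≤ (q:ℝ) * (q:ℝ) := by
    have ha := hd (n + 1)
    have hb := hd (n + 2)
    have h2 := hconstr.2
    have h2' : ¬(d (n + 1) = q - 1 ∧ d (n + 2) = q - 1) := by
      simpa [show n + 1 + 1 = n + 2 from rfl] using h2
    by_cases h : d (n + 1) = q - 1
    · have hb' : d (n + 2) + 2 ≤ q := by
        have : d (n + 2) ≠ q - 1 := fun hh => h2' ⟨h, hh⟩
        omega
      have ha' : d (n + 1) + 1 ≤ q := ha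
      have ha'' : (d (n + 1) : ℝ) + 1 ≤ (q:ℝ) := by exact_mod_cast ha'
      have hb'' : (d (n + 2) : ℝ) + 2 ≤ (q:ℝ) := by exact_mod_cast hb'
      nlinarith
    · have ha' : d (n + 1) + 2 ≤ q := by omega
      have ha'' : (d (n + 1) : ℝ) + 2 ≤ (q:ℝ) := by exact_mod_cast ha'
      have hb'' : (d (n + 2) : ℝ) + 1 ≤ (q:ℝ) := by
        have : d (n + 2) + 1 ≤ q := hb
        exact_mod_cast this
      nlinarith
  have ht_ub : t ≤ 1 - r ^ 2 := by
    have hgeo : ∑' i : ℕ, ((q:ℝ) - 1) * r ^ (i + 3) = r ^ 2 := by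
      have hc : ∀ i : ℕ, ((q:ℝ) - 1) * r ^ (i + 3) = (((q:ℝ) - 1) * r ^ 3) * r ^ i := by
        intro i; ring
      rw [tsum_congr hc, tsum_mul_left, tsum_geometric_of_lt_one hr0 hr1]
      have h1r : 1 - r = ((q:ℝ) - 1) * r := by
        have : ((q:ℝ) - 1) * r = (q:ℝ) * r - r := by ring
        rw [this, hqr]
      have hq1 : (q:ℝ) - 1 ≠ 0 := by linarith
      rw [h1r, mul_inv, mul_comm]
      field_simp
    have hBsum : Summable (fun i : ℕ => ((q:ℝ) - 1) * r ^ (i + 3)) := by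
      have := hsumG.mul_left (((q:ℝ) - 1) * r ^ 3)
      apply this.congr
      intro i; ring
    have hgshift : Summable (fun i : ℕ => g (i + 2)) := (summable_nat_add_iff 2).mpr hg
    have htail : ∑' i, g (i + 2) ≤ r ^ 2 := by
      rw [← hgeo]
      apply Summable.tsum_le_tsum _ hgshift hBsum
      intro i
      show (d (n + (i + 2) + 1) : ℝ) * r ^ (i + 2 + 1) ≤ ((q:ℝ) - 1) * r ^ (i + 3)
      rw [show i + 2 + 1 = i + 3 from rfl]
      exact mul_le_mul_of_nonneg_right (hdle _) (pow_nonneg hr0 _)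
    have hsplit2 : (∑ i ∈ Finset.range 2, g i) + ∑' i, g (i + 2) = t :=
      Summable.sum_add_tsum_nat_add 2 hg
    have hrange2 : (∑ i ∈ Finset.range 2, g i)
        = (d (n + 1) : ℝ) * r + (d (n + 2) : ℝ) * r ^ 2 := by
      rw [Finset.sum_range_succ, Finset.sum_range_one]
      show (d (n + 0 + 1) : ℝ) * r ^ (0 + 1) + (d (n + 1 + 1) : ℝ) * r ^ (1 + 1)
          = (d (n + 1) : ℝ) * r + (d (n + 2) : ℝ) * r ^ 2
      norm_num
    have hfin : (d (n + 1) : ℝ) * r + (d (n + 2) : ℝ) * r ^ 2 + r ^ 2 ≤ 1 - r ^ 2 := by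
      have h2 : (0:ℝ) < (q:ℝ) ^ 2 := by positivity
      rw [← sub_nonneg]
      have heq : 1 - r ^ 2 - ((d (n + 1) : ℝ) * r + (d (n + 2) : ℝ) * r ^ 2 + r ^ 2)
          = ((q:ℝ) * (q:ℝ) - ((d (n + 1) : ℝ) * (q:ℝ) + (d (n + 2) : ℝ) + 2)) / (q:ℝ) ^ 2 := by
        rw [hr_def]
        field_simp
        ring
      rw [heq]
      apply div_nonneg _ (le_of_lt h2)
      linarith
    linarith [htail, hsplit2, hrange2.symm.le]
  have ht0 : 0 ≤ t := le_trans (by positivity) ht_lb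
  -- assemble
  set m : ℤ := (A : ℤ) - p₁ with hm_def
  have hkey : lam - (p₁ : ℝ) / (q:ℝ) ^ n = ((m:ℝ) + t) * r ^ n := by
    have hdiv : (p₁ : ℝ) / (q:ℝ) ^ n = (p₁ : ℝ) * r ^ n := by
      rw [hr_def, div_eq_mul_inv, inv_pow]
    rw [hlam', ← hsplit, hP, hT, hdiv, hm_def]
    push_cast
    ring
  have habs : r ^ 2 ≤ |(m:ℝ) + t| := by
    rcases le_or_gt 0 (m:ℝ) with hm | hm
    · have : r ^ 2 ≤ (m:ℝ) + t := by linarith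
      exact this.trans (le_abs_self _)
    · have hm1 : (m:ℝ) ≤ -1 := by
        have hm' : m < 0 := by exact_mod_cast hm
        have : m ≤ -1 := by omega
        exact_mod_cast this
      have : (m:ℝ) + t ≤ -(r ^ 2) := by linarith
      calc r ^ 2 ≤ -((m:ℝ) + t) := by linarith
        _ ≤ |(m:ℝ) + t| := neg_le_abs _
  have hfinal : 1 / (q:ℝ) ^ (n + 2) = r ^ 2 * r ^ n := by
    rw [hr_def, ← pow_add, inv_pow, one_div, add_comm 2 n]
  rw [hkey, abs_mul, abs_pow, abs_of_nonneg hr0, hfinal]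
  exact mul_le_mul_of_nonneg_right habs (pow_nonneg hr0 _)
end

section
/- Let 0 < a < b. For every n ∈ ℕ there exist real coefficients a₁, …, aₙ such that for all t ∈ [a,b], |1 − ∑_{k=1}^n a_k t^k| ≤ 2·((√b − √a)/(√b + √a))ⁿ. -/
/-!
The affine map `t ↦ (b + a - 2t) / (b - a)` sends `[a, b]` onto `[-1, 1]`, where `|Tₙ| ≤ 1`, and
sends `0` to `(b + a) / (b - a) = cosh (log ρ)` with `ρ = (√b - √a) / (√b + √a)`. There
`Tₙ = cosh (n log ρ) ≥ ρ⁻ⁿ / 2`, so the transplanted Chebyshev polynomial divided by its value at `0`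
has constant term `1` and is bounded by `2ρⁿ` on `[a, b]`.
-/

open Polynomial Polynomial.Chebyshev Real

theorem Polynomial.exists_one_sub_sum_eq_eval_div_eval_zero {K : Type*} [Field K] {p : K[X]}
    {n : ℕ} (hp : p.natDegree ≤ n) (hp0 : p.eval 0 ≠ 0) :
    ∃ c : ℕ → K, ∀ t, 1 - ∑ k ∈ Finset.Icc 1 n, c k * t ^ k = p.eval t / p.eval 0 := by
  refine ⟨fun k => -(p.coeff k / p.eval 0), fun t => ?_⟩
  have hsplit : p.eval t = p.eval 0 + ∑ k ∈ Finset.Icc 1 n, p.coeff k * t ^ k := by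
    rw [eval_eq_sum_range' (Nat.lt_add_one_of_le hp), Finset.range_eq_Ico,
      Finset.sum_eq_sum_Ico_succ_bot (Nat.add_one_pos n), ← coeff_zero_eq_eval_zero,
      zero_add, Finset.Ico_add_one_right_eq_Icc, pow_zero, mul_one]
  rw [hsplit, add_div, div_self hp0, Finset.sum_div, sub_eq_add_neg, ← Finset.sum_neg_distrib]
  congr 1
  exact Finset.sum_congr rfl fun k _ => by ring

theorem add_div_sub_eq_half_add_inv {a b : ℝ} (ha : 0 ≤ a) (hab : a < b) :
    (b + a) / (b - a) =
      ((√b - √a) / (√b + √a) + ((√b - √a) / (√b + √a))⁻¹) / 2 := by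
  have hsab : √a < √b := sqrt_lt_sqrt ha hab
  have hsa : 0 ≤ √a := sqrt_nonneg a
  conv_lhs => rw [← sq_sqrt ha, ← sq_sqrt (ha.trans hab.le)]
  have h1 : √b - √a ≠ 0 := by linarith
  have h2 : √b + √a ≠ 0 := by linarith
  have h3 : √b ^ 2 - √a ^ 2 ≠ 0 := by nlinarith
  field_simp
  ring

namespace Polynomial.Chebyshev

theorem two_mul_eval_T_real_half_add_inv {ρ : ℝ} (hρ : 0 < ρ) (n : ℕ) :
    2 * (T ℝ n).eval ((ρ + ρ⁻¹) / 2) = ρ ^ n + (ρ ^ n)⁻¹ := by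
  rw [← cosh_log hρ, T_real_cosh, cosh_eq, Int.cast_natCast, exp_neg, exp_nat_mul, exp_log hρ]
  ring

theorem inv_eval_T_real_half_add_inv_le {ρ : ℝ} (hρ : 0 < ρ) (n : ℕ) :
    ((T ℝ n).eval ((ρ + ρ⁻¹) / 2))⁻¹ ≤ 2 * ρ ^ n := by
  have h := two_mul_eval_T_real_half_add_inv hρ n
  have hρn : 0 < ρ ^ n := pow_pos hρ n
  rw [inv_le_iff_one_le_mul₀' (by nlinarith [inv_pos.2 hρn])]
  nlinarith [mul_inv_cancel₀ hρn.ne']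

/-- `Tₙ` transplanted from `[-1, 1]` to `[a, b]`, oriented so that it is positive at `0 < a`. -/
noncomputable def intervalT (a b : ℝ) (n : ℕ) : ℝ[X] :=
  (T ℝ n).comp (Polynomial.C (-2 / (b - a)) * X + Polynomial.C ((b + a) / (b - a)))

variable {a b : ℝ}

theorem natDegree_intervalT_le (n : ℕ) : (intervalT a b n).natDegree ≤ n :=
  calc _ ≤ (T ℝ n).natDegree * 1 :=
        natDegree_comp_le.trans (Nat.mul_le_mul_left _ natDegree_linear_le)
    _ = n := by simp [natDegree_T]

theorem eval_zero_intervalT (n : ℕ) :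
    (intervalT a b n).eval 0 = (T ℝ n).eval ((b + a) / (b - a)) := by
  simp [intervalT, eval_comp]

theorem abs_eval_intervalT_le_one (hab : a < b) (n : ℕ) {t : ℝ} (ht : t ∈ Set.Icc a b) :
    |(intervalT a b n).eval t| ≤ 1 := by
  have hba : 0 < b - a := sub_pos.2 hab
  have hL : -2 / (b - a) * t + (b + a) / (b - a) = (b + a - 2 * t) / (b - a) := by ring
  rw [intervalT, eval_comp]
  apply abs_eval_T_real_le_one
  simp only [eval_add, eval_C, eval_mul, eval_X, hL, abs_div, abs_of_pos hba]
  rw [div_le_one hba, abs_le]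
  constructor <;> linarith [ht.1, ht.2]

end Polynomial.Chebyshev

theorem stmt_7 (a b : ℝ) (ha : 0 < a) (hab : a < b) (n : ℕ) :
    ∃ c : ℕ → ℝ, ∀ t ∈ Set.Icc a b,
      |1 - ∑ k ∈ Finset.Icc 1 n, c k * t ^ k| ≤
        2 * ((Real.sqrt b - Real.sqrt a) / (Real.sqrt b + Real.sqrt a)) ^ n := by
  set ρ := (√b - √a) / (√b + √a)
  have hρ : 0 < ρ := div_pos (sub_pos.2 (sqrt_lt_sqrt ha.le hab)) (by positivity)
  set P := intervalT a b n
  have hP0 : P.eval 0 = (T ℝ n).eval ((ρ + ρ⁻¹) / 2) := by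
    rw [eval_zero_intervalT, add_div_sub_eq_half_add_inv ha.le hab]
  have hP0_pos : 0 < P.eval 0 := by
    rw [eval_zero_intervalT]
    exact one_pos.trans_le (one_le_eval_T_real n ((one_le_div (by linarith)).2 (by linarith)))
  obtain ⟨c, hc⟩ := exists_one_sub_sum_eq_eval_div_eval_zero (natDegree_intervalT_le n) hP0_pos.ne'
  refine ⟨c, fun t ht => ?_⟩
  calc |1 - ∑ k ∈ Finset.Icc 1 n, c k * t ^ k| = |P.eval t| / P.eval 0 := by
        rw [hc, abs_div, abs_of_pos hP0_pos]
    _ ≤ 1 / P.eval 0 := by gcongr; exact abs_eval_intervalT_le_one hab n ht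
    _ ≤ 2 * ρ ^ n := by rw [one_div, hP0]; exact inv_eval_T_real_half_add_inv_le hρ n
end

section
/- Let 0 < a < b and λ ∈ ℝ \ ℤ, and d ≥ 1. For every polynomial q in d variables with integer coefficients and degree ≤ n_j in the j-th variable with ∑ n_j = n, sup_{x ∈ [a,b]^d} |λ − q(x)| ≥ (min_{c ∈ ℤ} |λ − c|) · ((√b − √a)/(√b + √a))ⁿ. -/
/-!
In one variable, with `c = (a + b)/2` and `r = (b - a)/4`, the Joukowski map
`w ↦ c + r (w + w⁻¹)` sends the unit circle onto `[a, b]` and the point `-ρ`, where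
`ρ = (√b - √a)/(√b + √a)`, to `0`. If `deg p ≤ m`, then `w ^ m p(c + r (w + w⁻¹))` is a polynomial
in `w`, so the maximum modulus principle on the unit disc gives `ρ ^ m |p 0| ≤ sup_{[a,b]} |p|`.
Applying this one coordinate at a time to the coefficients of `p` in the remaining variables
yields the bound `ρ ^ (n₁ + ⋯ + n_d) |p 0| ≤ sup_{[a,b]^d} |p|` for `p = λ - q`, and
`p 0 = λ - q 0` with `q 0 ∈ ℤ`.
-/
open Polynomial

theorem Polynomial.exists_eval_eq_pow_mul_eval_add_mul_add_inv {K : Type*} [Field K]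
    {P : K[X]} {m : ℕ} (hm : P.natDegree ≤ m) (c r : K) :
    ∃ Q : K[X], ∀ w ≠ 0, Q.eval w = w ^ m * P.eval (c + r * (w + w⁻¹)) := by
  refine ⟨∑ k ∈ Finset.range (m + 1),
    C (P.coeff k) * X ^ (m - k) * (C r * X ^ 2 + C c * X + C r) ^ k, fun w hw => ?_⟩
  rw [eval_finsetSum, eval_eq_sum_range' (Nat.lt_succ_of_le hm), Finset.mul_sum]
  refine Finset.sum_congr rfl fun k hk => ?_
  have hpow : w ^ (m - k) * w ^ k = w ^ m := by
    rw [← pow_add, Nat.sub_add_cancel (Nat.lt_succ_iff.1 (Finset.mem_range.1 hk))]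
  have hquad : r * w ^ 2 + c * w + r = w * (c + r * (w + w⁻¹)) := by
    field_simp; ring
  simp only [eval_mul, eval_add, eval_pow, eval_C, eval_X, hquad, mul_pow]
  rw [← hpow]
  ring

theorem Complex.ofReal_add_mul_add_inv_of_norm_eq_one (c r : ℝ) {w : ℂ} (hw : ‖w‖ = 1) :
    (c : ℂ) + r * (w + w⁻¹) = ((c + 2 * r * w.re : ℝ) : ℂ) := by
  rw [Complex.inv_eq_conj hw, Complex.add_conj]
  push_cast
  ring

theorem Polynomial.norm_pow_mul_norm_eval_add_mul_add_inv_le {P : ℂ[X]} {m : ℕ}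
    (hm : P.natDegree ≤ m) {c r M : ℝ}
    (hM : ∀ x : ℝ, |x - c| ≤ 2 * |r| → ‖P.eval (x : ℂ)‖ ≤ M) {w : ℂ} (hw0 : w ≠ 0)
    (hw : ‖w‖ ≤ 1) : ‖w‖ ^ m * ‖P.eval (c + r * (w + w⁻¹))‖ ≤ M := by
  obtain ⟨Q, hQ⟩ := P.exists_eval_eq_pow_mul_eval_add_mul_add_inv hm c r
  have hsphere : ∀ z ∈ frontier (Metric.ball (0 : ℂ) 1), ‖Q.eval z‖ ≤ M := by
    intro z hz
    rw [frontier_ball 0 one_ne_zero, mem_sphere_zero_iff_norm] at hz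
    have hz0 : z ≠ 0 := norm_ne_zero_iff.1 (hz.symm ▸ one_ne_zero)
    rw [hQ z hz0, norm_mul, norm_pow, hz, one_pow, one_mul,
      Complex.ofReal_add_mul_add_inv_of_norm_eq_one c r hz]
    refine hM _ ?_
    have hre : |z.re| ≤ 1 := hz ▸ Complex.abs_re_le_norm z
    rw [add_sub_cancel_left, abs_mul, abs_mul, abs_two]
    nlinarith [abs_nonneg r]
  have hwQ := Complex.norm_le_of_forall_mem_frontier_norm_le Metric.isBounded_ball
    Q.differentiable.diffContOnCl hsphere
    (by rwa [closure_ball 0 one_ne_zero, mem_closedBall_zero_iff])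
  rwa [hQ w hw0, norm_mul, norm_pow] at hwQ

theorem Polynomial.abs_eval_zero_mul_pow_le {a b : ℝ} (ha : 0 < a) (hab : a < b) {p : ℝ[X]}
    {m : ℕ} (hp : p.natDegree ≤ m) {M : ℝ} (hM : ∀ x ∈ Set.Icc a b, |p.eval x| ≤ M) :
    |p.eval 0| * ((√b - √a) / (√b + √a)) ^ m ≤ M := by
  have hsa : 0 < √a := Real.sqrt_pos.2 ha
  have hsab : √a < √b := Real.sqrt_lt_sqrt ha.le hab
  set ρ := (√b - √a) / (√b + √a)
  have hρ0 : 0 < ρ := div_pos (by linarith) (by linarith)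
  have hρ1 : ρ < 1 := (div_lt_one (by linarith)).2 (by linarith)
  set c := (a + b) / 2
  set r := (b - a) / 4
  -- since `ρ + ρ⁻¹ = 2 (a + b) / (b - a)`
  have hzero : c + r * (-ρ + (-ρ)⁻¹) = 0 := by
    simp only [c, r, ρ, inv_neg, inv_div]
    field_simp [(sub_pos.2 hsab).ne']
    linear_combination (-8 * b) * Real.sq_sqrt ha.le + (8 * a) * Real.sq_sqrt (ha.trans hab).le
  have hreal : ∀ x : ℝ, (p.map (algebraMap ℝ ℂ)).eval (x : ℂ) = p.eval x := fun x => by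
    rw [eval_map]
    exact eval₂_at_apply _ x
  have hM' : ∀ x : ℝ, |x - c| ≤ 2 * |r| →
      ‖(p.map (algebraMap ℝ ℂ)).eval (x : ℂ)‖ ≤ M := by
    intro x hx
    rw [hreal, Complex.norm_real, Real.norm_eq_abs]
    rw [abs_of_pos (show 0 < r by simp only [r]; linarith), abs_le] at hx
    simp only [c, r] at hx
    exact hM x ⟨by linarith [hx.1], by linarith [hx.2]⟩
  have hbound := norm_pow_mul_norm_eval_add_mul_add_inv_le
    (natDegree_map_le.trans hp) hM' (w := ((-ρ : ℝ) : ℂ)) (by simpa using hρ0.ne')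
    (by rw [Complex.norm_real, Real.norm_eq_abs, abs_neg, abs_of_pos hρ0]; exact hρ1.le)
  rwa [← Complex.ofReal_inv, ← Complex.ofReal_add, ← Complex.ofReal_mul, ← Complex.ofReal_add,
    hzero, hreal, Complex.norm_real, Complex.norm_real,
    Real.norm_eq_abs, Real.norm_eq_abs, abs_neg, abs_of_pos hρ0, mul_comm] at hbound

theorem MvPolynomial.abs_eval_zero_mul_pow_sum_le {a b : ℝ} (ha : 0 < a) (hab : a < b) {d : ℕ}
    {p : MvPolynomial (Fin d) ℝ} {nv : Fin d → ℕ} (hdeg : ∀ j, p.degreeOf j ≤ nv j) {M : ℝ}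
    (hM : ∀ x : Fin d → ℝ, (∀ i, x i ∈ Set.Icc a b) → |eval x p| ≤ M) :
    |eval 0 p| * ((√b - √a) / (√b + √a)) ^ ∑ j, nv j ≤ M := by
  set ρ := (√b - √a) / (√b + √a)
  have hρ0 : 0 < ρ := div_pos (sub_pos.2 (Real.sqrt_lt_sqrt ha.le hab)) (by positivity)
  induction d generalizing M with
  | zero => simpa using hM 0 finZeroElim
  | succ d ih =>
    set p₀ := (finSuccEquiv ℝ d p).coeff 0
    have hp₀_eval : ∀ x, eval x p₀ = ((finSuccEquiv ℝ d p).map (eval x)).eval 0 := fun x => by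
      rw [← Polynomial.coeff_zero_eq_eval_zero, Polynomial.coeff_map]
    have hp₀ : ∀ x : Fin d → ℝ, (∀ i, x i ∈ Set.Icc a b) → |eval x p₀| ≤ M / ρ ^ nv 0 := by
      intro x hx
      rw [le_div_iff₀ (by positivity), hp₀_eval]
      refine Polynomial.abs_eval_zero_mul_pow_le ha hab
        (Polynomial.natDegree_map_le.trans ((natDegree_finSuccEquiv p).trans_le (hdeg 0)))
        fun t ht => ?_
      rw [← eval_eq_eval_mv_eval']
      exact hM _ (Fin.cases ht hx)
    have h0 : eval 0 p = eval 0 p₀ := by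
      rw [← Matrix.cons_zero_zero, Matrix.vecCons, eval_eq_eval_mv_eval', hp₀_eval]
    have hrest := ih (fun j => (degreeOf_coeff_finSuccEquiv p j 0).trans (hdeg j.succ)) hp₀
    rw [le_div_iff₀ (by positivity)] at hrest
    rw [h0, Fin.sum_univ_succ, pow_add]
    linarith

theorem MvPolynomial.degreeOf_map_of_injective {R S σ : Type*} [CommSemiring R] [CommSemiring S]
    (p : MvPolynomial σ R) {f : R →+* S} (hf : Function.Injective f) (i : σ) :
    (p.map f).degreeOf i = p.degreeOf i := by
  classical
  rw [degreeOf_def, degreeOf_def, degrees_map_of_injective p hf]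

theorem stmt_10_general (a b : ℝ) (ha : 0 < a) (hab : a < b)
    (lam : ℝ) (d : ℕ)
    (q : MvPolynomial (Fin d) ℤ) (nv : Fin d → ℕ) (n : ℕ)
    (hdeg : ∀ j, q.degreeOf j ≤ nv j) (hsum : ∑ j, nv j = n)
    (M : ℝ)
    (hM : ∀ x : Fin d → ℝ, (∀ i, x i ∈ Set.Icc a b) →
      |lam - MvPolynomial.eval x (q.map (Int.castRingHom ℝ))| ≤ M) :
    sInf {y : ℝ | ∃ c : ℤ, y = |lam - c|} *
      ((Real.sqrt b - Real.sqrt a) / (Real.sqrt b + Real.sqrt a)) ^ n ≤ M := by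
  open MvPolynomial in
  set p : MvPolynomial (Fin d) ℝ := MvPolynomial.C lam - q.map (Int.castRingHom ℝ)
  have hp_eval : ∀ x, eval x p = lam - eval x (q.map (Int.castRingHom ℝ)) := by simp [p]
  have hp_deg : ∀ j, p.degreeOf j ≤ nv j := fun j => by
    refine (degreeOf_sub_le j _ _).trans (max_le (by rw [degreeOf_C]; exact Nat.zero_le _) ?_)
    rw [degreeOf_map_of_injective q Int.cast_injective]
    exact hdeg j
  have hp_zero : eval 0 p = lam - (constantCoeff q : ℤ) := by
    rw [hp_eval, ← eq_intCast (Int.castRingHom ℝ), ← constantCoeff_map, ← eval_zero']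
    rfl
  have hbound := abs_eval_zero_mul_pow_sum_le ha hab hp_deg fun x hx => hp_eval x ▸ hM x hx
  have hinf : sInf {y : ℝ | ∃ c : ℤ, y = |lam - c|} ≤ |lam - (constantCoeff q : ℤ)| :=
    csInf_le ⟨0, fun _ ⟨_, hy⟩ => hy ▸ abs_nonneg _⟩ ⟨_, rfl⟩
  rw [hp_zero, hsum] at hbound
  exact (mul_le_mul_of_nonneg_right hinf
    (pow_nonneg (div_nonneg (sub_nonneg.2 (Real.sqrt_le_sqrt hab.le)) (by positivity)) n)).trans
    hbound

theorem stmt_10 (a b : ℝ) (ha : 0 < a) (hab : a < b)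
    (lam : ℝ) (hlam : ∀ c : ℤ, lam ≠ c) (d : ℕ) (hd : 1 ≤ d)
    (q : MvPolynomial (Fin d) ℤ) (nv : Fin d → ℕ) (n : ℕ)
    (hdeg : ∀ j, q.degreeOf j ≤ nv j) (hsum : ∑ j, nv j = n)
    (M : ℝ)
    (hM : ∀ x : Fin d → ℝ, (∀ i, x i ∈ Set.Icc a b) →
      |lam - MvPolynomial.eval x (q.map (Int.castRingHom ℝ))| ≤ M) :
    sInf {y : ℝ | ∃ c : ℤ, y = |lam - c|} *
      ((Real.sqrt b - Real.sqrt a) / (Real.sqrt b + Real.sqrt a)) ^ n ≤ M :=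
  stmt_10_general a b ha hab lam d q nv n hdeg hsum M hM
end

section
/- There is an absolute constant c > 0 such that for every n ≥ 2 and every polynomial p of degree at most n, max_{x ∈ [0,1]} |p(x)| ≤ c · max_{x ∈ [1/n², 1]} |p(x)|. -/
open Polynomial Polynomial.Chebyshev Real Finset

lemma cheb_natDegree_le (n : ℕ) : (T ℝ (n : ℤ)).natDegree ≤ n := by
  have key : ∀ m : ℕ, (T ℝ (m : ℤ)).natDegree ≤ m ∧ (T ℝ ((m : ℤ) + 1)).natDegree ≤ m + 1 := by
    intro m
    induction m with
    | zero => simp [T_zero, T_one]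
    | succ k ih =>
      refine ⟨ih.2, ?_⟩
      have h : ((k : ℤ) + 1) + 1 = (k : ℤ) + 2 := by ring
      rw [Nat.cast_succ, h, T_add_two]
      refine le_trans (natDegree_sub_le _ _) (max_le ?_ (le_trans ih.1 (by omega)))
      refine le_trans (natDegree_mul_le) ?_
      have h2 : (2 * X : ℝ[X]).natDegree ≤ 1 :=
        le_trans (natDegree_mul_le) (by simp)
      have := ih.2
      omega
  exact (key n).1

lemma cheb_cosh (n : ℤ) (t : ℝ) :
    (T ℝ n).eval (Real.cosh t) = Real.cosh (n * t) := by
  have h := T_complex_cos ((t : ℂ) * Complex.I) n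
  rw [Complex.cos_mul_I] at h
  have h2 : (n : ℂ) * ((t : ℂ) * Complex.I) = ((n * t : ℝ) : ℂ) * Complex.I := by
    push_cast; ring
  rw [h2, Complex.cos_mul_I] at h
  apply Complex.ofReal_injective
  rw [complex_ofReal_eval_T, Complex.ofReal_cosh, h, Complex.ofReal_cosh]

set_option maxHeartbeats 1000000 in
theorem stmt_11 :
    ∃ c : ℝ, 0 < c ∧ ∀ n : ℕ, 2 ≤ n → ∀ p : Polynomial ℝ, p.natDegree ≤ n →
      ∀ M : ℝ, (∀ x ∈ Set.Icc (1 / (n : ℝ) ^ 2) 1, |p.eval x| ≤ M) →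
        ∀ x ∈ Set.Icc (0 : ℝ) 1, |p.eval x| ≤ c * M := by
  refine ⟨100, by norm_num, ?_⟩
  intro n hn p hdeg M hM x hx
  have hN : (2:ℝ) ≤ (n:ℝ) := by exact_mod_cast hn
  have hn0 : (0:ℝ) < (n:ℝ) := by linarith
  set a : ℝ := 1 / (n:ℝ)^2 with ha
  have ha0 : 0 < a := by positivity
  have ha1 : a ≤ 1/4 := by
    rw [ha, div_le_div_iff₀ (by positivity) (by norm_num)]
    nlinarith
  have hM0 : 0 ≤ M := le_trans (abs_nonneg _) (hM 1 ⟨by linarith, le_refl 1⟩)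
  by_cases hax : a ≤ x
  · have := hM x ⟨hax, hx.2⟩
    linarith
  · push_neg at hax
    have hx0 : 0 ≤ x := hx.1
    set v : ℕ → ℝ := fun i => (1+a)/2 + (1-a)/2 * Real.cos (i * π / n) with hv
    set s : Finset ℕ := Finset.range (n+1) with hs
    have hπ : 0 < π := Real.pi_pos
    have hθmem : ∀ i : ℕ, i ≤ n → (i * π / n) ∈ Set.Icc 0 π := by
      intro i hi
      constructor
      · positivity
      · rw [div_le_iff₀ hn0]
        have : (i:ℝ) ≤ n := by exact_mod_cast hi
        nlinarith
    have hanti : ∀ i j : ℕ, i < j → j ≤ n → v j < v i := by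
      intro i j hij hj
      have hij' : (i:ℝ) * π / n < j * π / n := by
        rw [div_lt_div_iff_of_pos_right hn0]
        have : (i:ℝ) < j := by exact_mod_cast hij
        nlinarith
      have hc := Real.strictAntiOn_cos (hθmem i (by omega)) (hθmem j hj) hij'
      have h2 : 0 < (1-a)/2 := by linarith
      simp only [hv]
      nlinarith
    have hinj : Set.InjOn v s := by
      intro i hi j hj hne
      simp only [hs, Finset.coe_range, Set.mem_Iio] at hi hj
      by_contra hne2
      rcases lt_trichotomy i j with h | h | h
      · exact absurd hne (ne_of_lt (hanti i j h (by omega))).symm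
      · exact hne2 h
      · exact absurd hne (ne_of_gt (hanti j i h (by omega))).symm
    have hva : ∀ i : ℕ, i ≤ n → a ≤ v i ∧ v i ≤ 1 := by
      intro i hi
      have h1 := Real.neg_one_le_cos (i * π / n)
      have h2 := Real.cos_le_one (i * π / n)
      constructor <;> · simp only [hv]; nlinarith
    have hcard : #s = n + 1 := Finset.card_range _
    have hdegp : p.degree < (#s : ℕ) := by
      rw [hcard]
      exact lt_of_le_of_lt degree_le_natDegree (by exact_mod_cast Nat.lt_succ_of_le hdeg)
    have hane : (1:ℝ) - a ≠ 0 := by linarith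
    set w : ℝ := 2/(1-a) with hw
    set u0 : ℝ := (1+a)/(1-a) with hu0
    set q : ℝ[X] := (T ℝ (n:ℤ)).comp (C u0 - C w * X) with hqdef
    have hlin1 : (C u0 - C w * X : ℝ[X]) = C (-w) * X + C u0 := by
      simp [map_neg]; ring
    have hqdeg : q.degree < (#s : ℕ) := by
      rw [hcard]
      have hnd : q.natDegree ≤ n := by
        rw [hqdef, natDegree_comp, hlin1, natDegree_linear (by
          simp only [hw]
          intro hcon
          rw [neg_eq_zero, _root_.div_eq_zero_iff] at hcon
          rcases hcon with h | h
          · norm_num at h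
          · exact hane h)]
        simpa using cheb_natDegree_le n
      exact lt_of_le_of_lt degree_le_natDegree (by exact_mod_cast Nat.lt_succ_of_le hnd)
    have hqval : ∀ i ∈ s, q.eval (v i) = (-1:ℝ)^(n - i) := by
      intro i hi
      have hi' : i ≤ n := by
        simp only [hs, Finset.mem_range] at hi; omega
      rw [hqdef, eval_comp]
      have hlin : (C u0 - C w * X : ℝ[X]).eval (v i) = Real.cos (π - i * π / n) := by
        rw [Real.cos_pi_sub]
        simp only [eval_sub, eval_mul, eval_C, eval_X, hu0, hw, hv]
        field_simp
        ring
      rw [hlin, T_real_cos]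
      have harg : ((n:ℤ):ℝ) * (π - i * π / n) = ((n - i : ℕ) : ℝ) * π := by
        rw [Nat.cast_sub hi']
        push_cast
        field_simp
      rw [harg]
      have := Real.cos_nat_mul_pi_sub 0 (n-i)
      simpa using this
    have hqi : q = Lagrange.interpolate s v (fun i => (-1:ℝ)^(n-i)) :=
      Lagrange.eq_interpolate_of_eval_eq _ hinj hqdeg hqval
    have hBeval : ∀ (i : ℕ) (y : ℝ), (Lagrange.basis s v i).eval y
        = ∏ j ∈ s.erase i, ((v i - v j)⁻¹ * (y - v j)) := by
      intro i y
      rw [Lagrange.basis, eval_prod]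
      exact Finset.prod_congr rfl (fun j _ => by simp [Lagrange.basisDivisor])
    have hmem : ∀ {j : ℕ} {i : ℕ}, j ∈ s.erase i → j ≤ n ∧ j ≠ i := by
      intro j i hj
      rw [Finset.mem_erase, hs, Finset.mem_range] at hj
      exact ⟨by omega, hj.1⟩
    have hsign : ∀ i ∈ s, (Lagrange.basis s v i).eval 0
        = (-1:ℝ)^(n-i) * |(Lagrange.basis s v i).eval 0| := by
      intro i hi
      have hi' : i ≤ n := by simp only [hs, Finset.mem_range] at hi; omega
      rw [hBeval, Finset.abs_prod]
      have hfac : ∀ j ∈ s.erase i, (v i - v j)⁻¹ * ((0:ℝ) - v j)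
          = (if i < j then (-1:ℝ) else 1) * |(v i - v j)⁻¹ * ((0:ℝ) - v j)| := by
        intro j hj
        obtain ⟨hjn, hjne⟩ := hmem hj
        have hvj : a ≤ v j := (hva j hjn).1
        rcases lt_or_gt_of_ne hjne with hlt | hgt
        · -- j < i : factor nonneg
          have hvi : v i < v j := hanti j i hlt hi'
          rw [if_neg (by omega), one_mul, abs_of_nonneg]
          have h1 : (v i - v j)⁻¹ ≤ 0 := by rw [inv_nonpos]; linarith
          have h2 := mul_nonneg (neg_nonneg.mpr h1) (le_trans ha0.le hvj)
          have h3 : (v i - v j)⁻¹ * ((0:ℝ) - v j) = (-(v i - v j)⁻¹) * v j := by ring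
          rw [h3]; exact h2
        · -- i < j : factor nonpos
          have hvi : v j < v i := hanti i j hgt hjn
          rw [if_pos hgt, neg_one_mul, abs_of_nonpos, neg_neg]
          have h1 : 0 ≤ (v i - v j)⁻¹ := by rw [inv_nonneg]; linarith
          have h2 := mul_nonneg h1 (le_trans ha0.le hvj)
          have h3 : (v i - v j)⁻¹ * ((0:ℝ) - v j) = -((v i - v j)⁻¹ * v j) := by ring
          rw [h3]; exact neg_nonpos.mpr h2
      rw [Finset.prod_congr rfl hfac, Finset.prod_mul_distrib]
      congr 1
      rw [← Finset.prod_filter]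
      have hfil : (s.erase i).filter (fun j => i < j) = Finset.Ioo i (n+1) := by
        ext j
        simp only [hs, Finset.mem_filter, Finset.mem_erase, Finset.mem_range, Finset.mem_Ioo]
        omega
      rw [hfil, Finset.prod_const, Nat.card_Ioo]
      congr 1
      omega
    have hBle : ∀ i ∈ s, |(Lagrange.basis s v i).eval x| ≤ |(Lagrange.basis s v i).eval 0| := by
      intro i hi
      rw [hBeval, hBeval, Finset.abs_prod, Finset.abs_prod]
      refine Finset.prod_le_prod (fun j _ => abs_nonneg _) ?_
      intro j hj
      obtain ⟨hjn, _⟩ := hmem hj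
      have hvj : a ≤ v j := (hva j hjn).1
      rw [abs_mul, abs_mul]
      refine mul_le_mul_of_nonneg_left ?_ (abs_nonneg _)
      rw [abs_of_nonpos (by linarith : x - v j ≤ 0), abs_of_nonpos (by linarith : (0:ℝ) - v j ≤ 0)]
      linarith
    have hp : p = Lagrange.interpolate s v (fun i => p.eval (v i)) :=
      Lagrange.eq_interpolate hinj hdegp
    have hsum0 : ∑ i ∈ s, |(Lagrange.basis s v i).eval 0| = q.eval 0 := by
      rw [hqi, Lagrange.interpolate_apply, eval_finset_sum]
      refine Finset.sum_congr rfl ?_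
      intro i hi
      rw [eval_mul, eval_C]
      conv_rhs => rw [hsign i hi]
      rw [← mul_assoc, ← pow_add, Even.neg_one_pow ⟨n - i, rfl⟩, one_mul]
    have hq0 : q.eval 0 ≤ 55 := by
      have hq0e : q.eval 0 = (T ℝ (n:ℤ)).eval u0 := by
        rw [hqdef, eval_comp]; simp
      have hN1 : (0:ℝ) < (n:ℝ) - 1 := by linarith
      have hrpos : (0:ℝ) < ((n:ℝ)+1)/((n:ℝ)-1) := by positivity
      have hr1 : (1:ℝ) ≤ ((n:ℝ)+1)/((n:ℝ)-1) := by
        rw [le_div_iff₀ hN1]; linarith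
      set t : ℝ := Real.log (((n:ℝ)+1)/((n:ℝ)-1)) with htdef
      have hcosh : Real.cosh t = u0 := by
        rw [Real.cosh_eq, htdef, Real.exp_log hrpos, Real.exp_neg, Real.exp_log hrpos, hu0, ha]
        have hn2 : (n:ℝ)^2 - 1 ≠ 0 := by nlinarith
        field_simp
        ring_nf
      have ht0 : 0 ≤ t := Real.log_nonneg hr1
      have ht4 : ((n:ℤ):ℝ) * t ≤ 4 := by
        have hle : t ≤ 2/((n:ℝ)-1) := by
          have := Real.log_le_sub_one_of_pos hrpos
          rw [← htdef] at this
          have h2 : ((n:ℝ)+1)/((n:ℝ)-1) - 1 = 2/((n:ℝ)-1) := by field_simp; norm_num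
          linarith
        have : (n:ℝ) * t ≤ (n:ℝ) * (2/((n:ℝ)-1)) :=
          mul_le_mul_of_nonneg_left hle (by linarith)
        have h3 : (n:ℝ) * (2/((n:ℝ)-1)) ≤ 4 := by
          rw [mul_div_assoc', div_le_iff₀ hN1]; linarith
        push_cast
        linarith
      rw [hq0e, ← hcosh, cheb_cosh]
      have hcc : Real.cosh (((n:ℤ):ℝ) * t) ≤ Real.cosh 4 := by
        rw [Real.cosh_le_cosh]
        have hnt0 : 0 ≤ ((n:ℤ):ℝ) * t := by positivity
        rw [abs_of_nonneg hnt0, abs_of_nonneg (by norm_num : (0:ℝ) ≤ 4)]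
        exact ht4
      have hc4 : Real.cosh 4 ≤ Real.exp 4 := by
        rw [Real.cosh_eq]
        have := Real.exp_le_exp.mpr (by norm_num : (-4:ℝ) ≤ 4)
        linarith
      have he4 : Real.exp 4 ≤ 55 := by
        have h1 : Real.exp 1 ≤ 2.7182818286 := le_of_lt Real.exp_one_lt_d9
        have h2 : Real.exp 4 = (Real.exp 1)^4 := by
          rw [← Real.exp_nat_mul]; norm_num
        rw [h2]
        calc (Real.exp 1)^4 ≤ (2.7182818286:ℝ)^4 :=
              pow_le_pow_left₀ (Real.exp_pos 1).le h1 4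
          _ ≤ 55 := by norm_num
      linarith
    have hform : p.eval x = ∑ i ∈ s, p.eval (v i) * (Lagrange.basis s v i).eval x := by
      conv_lhs => rw [hp]
      rw [Lagrange.interpolate_apply, eval_finset_sum]
      exact Finset.sum_congr rfl (fun i _ => by rw [eval_mul, eval_C])
    have hmain : |p.eval x| ≤ M * q.eval 0 := by
      rw [hform]
      refine le_trans (Finset.abs_sum_le_sum_abs _ _) ?_
      rw [← hsum0, Finset.mul_sum]
      refine Finset.sum_le_sum ?_
      intro i hi
      have hi' : i ≤ n := by simp only [hs, Finset.mem_range] at hi; omega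
      rw [abs_mul]
      refine mul_le_mul (hM (v i) ⟨(hva i hi').1, (hva i hi').2⟩) (hBle i hi)
        (abs_nonneg _) hM0
    have : M * q.eval 0 ≤ M * 55 := mul_le_mul_of_nonneg_left hq0 hM0
    linarith
end
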